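/- Let μ be Lebesgue measure on [0,1], and for measurable f : [0,1] → ℝ set N(f) = sup_{n ≥ 1} n·2^n · sup{ ∫_A |f| dμ : A ⊆ [0,1] measurable, μ(A) ≤ 1/(2^n·n!) } ∈ [0,∞]. Let c_n = 1/(2^n·(n+1)!) and Y = Σ_{n=3}^∞ n!·1_{[c_{n+1}, c_n)}. Then N(Y) < ∞. -/

import Mathlib

open MeasureTheory
open scoped ENNReal

/-- Lebesgue measure on `[0,1]`. -/
noncomputable def μ01 : Measure ℝ := volume.restrict (Set.Icc (0 : ℝ) 1)

/-- The rearrangement-invariant norm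
`N(f) = sup_{n ≥ 1} n·2ⁿ · sup {∫_A |f| dμ : A ⊆ [0,1] measurable, μ(A) ≤ 1/(2ⁿ·n!)}`. -/
noncomputable def Nnorm (f : ℝ → ℝ) : ℝ≥0∞ :=
  ⨆ (n : ℕ) (_ : 1 ≤ n),
    ((n : ℝ≥0∞) * 2 ^ n) *
      ⨆ (A : Set ℝ) (_ : MeasurableSet A) (_ : A ⊆ Set.Icc (0 : ℝ) 1)
        (_ : μ01 A ≤ 1 / ((2 : ℝ≥0∞) ^ n * (Nat.factorial n : ℝ≥0∞))),
        ∫⁻ t in A, ENNReal.ofReal |f t| ∂μ01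

/-- `c n = 1/(2ⁿ·(n+1)!)`. -/
noncomputable def cseq (n : ℕ) : ℝ := 1 / (2 ^ n * (Nat.factorial (n + 1)))

/-- `Y = Σ_{n ≥ 3} n!·1_{[c_{n+1}, c_n)}`. -/
noncomputable def Yfun : ℝ → ℝ := fun t =>
  ∑' n : ℕ, (Set.Ico (cseq (n + 4)) (cseq (n + 3))).indicator
    (fun _ => ((n + 3).factorial : ℝ)) t

lemma cseq_pos (n : ℕ) : 0 < cseq n := by
  unfold cseq
  positivity

lemma cseq_anti {m n : ℕ} (h : m ≤ n) : cseq n ≤ cseq m := by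
  unfold cseq
  apply one_div_le_one_div_of_le (by positivity)
  have h1 : (2 : ℝ) ^ m ≤ 2 ^ n := pow_le_pow_right₀ (by norm_num) h
  have h2 : ((m + 1).factorial : ℝ) ≤ ((n + 1).factorial : ℝ) := by
    exact_mod_cast Nat.factorial_le (by omega)
  have := (Nat.factorial_pos (m + 1))
  nlinarith [pow_pos (show (0:ℝ) < 2 by norm_num) m,
    (show (0:ℝ) < ((m+1).factorial : ℝ) by exact_mod_cast this)]

lemma mem_Ico_unique {t : ℝ} {m m' : ℕ}
    (h : t ∈ Set.Ico (cseq (m + 4)) (cseq (m + 3)))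
    (h' : t ∈ Set.Ico (cseq (m' + 4)) (cseq (m' + 3))) : m = m' := by
  by_contra hne
  rcases Nat.lt_or_ge m m' with hlt | hge
  · have : cseq (m' + 3) ≤ cseq (m + 4) := cseq_anti (by omega)
    have := h.1
    have := h'.2
    linarith
  · have hlt' : m' < m := by omega
    have : cseq (m + 3) ≤ cseq (m' + 4) := cseq_anti (by omega)
    have := h'.1
    have := h.2
    linarith

lemma ofReal_Yfun (t : ℝ) :
    ENNReal.ofReal |Yfun t| =
      ∑' n : ℕ, (Set.Ico (cseq (n + 4)) (cseq (n + 3))).indicator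
        (fun _ => (((n + 3).factorial : ℕ) : ℝ≥0∞)) t := by
  by_cases h : ∃ m, t ∈ Set.Ico (cseq (m + 4)) (cseq (m + 3))
  · obtain ⟨m, hm⟩ := h
    have hz : ∀ n, n ≠ m → t ∉ Set.Ico (cseq (n + 4)) (cseq (n + 3)) := by
      intro n hn hmem
      exact hn (mem_Ico_unique hmem hm)
    rw [tsum_eq_single m (fun n hn => by
      simp [Set.indicator_of_notMem (hz n hn)])]
    unfold Yfun
    rw [tsum_eq_single m (fun n hn => by
      simp [Set.indicator_of_notMem (hz n hn)])]
    rw [Set.indicator_of_mem hm, Set.indicator_of_mem hm]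
    rw [abs_of_nonneg (by positivity)]
    exact ENNReal.ofReal_natCast _
  · push_neg at h
    have h0 : Yfun t = 0 := by
      unfold Yfun
      simp [Set.indicator_of_notMem (h _)]
    rw [h0]
    simp [Set.indicator_of_notMem (h _)]
lemma lintegral_Yfun (A : Set ℝ) (hA : MeasurableSet A) :
    ∫⁻ t in A, ENNReal.ofReal |Yfun t| ∂μ01 =
      ∑' m : ℕ, (((m + 3).factorial : ℕ) : ℝ≥0∞) *
        μ01 (Set.Ico (cseq (m + 4)) (cseq (m + 3)) ∩ A) := by
  rw [lintegral_congr fun t => ofReal_Yfun t]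
  rw [lintegral_tsum (fun m => (measurable_const.indicator measurableSet_Ico).aemeasurable)]
  congr 1
  funext m
  rw [lintegral_indicator_const measurableSet_Ico]
  rw [Measure.restrict_apply measurableSet_Ico]

lemma sumfact (j : ℕ) :
    ∑ m ∈ Finset.range j, (m + 3).factorial ≤ 2 * (j + 2).factorial := by
  induction j with
  | zero => simp [Nat.factorial]
  | succ j ih =>
    rw [Finset.sum_range_succ]
    have h1 : 2 * (j + 2).factorial ≤ (j + 3).factorial := by
      rw [show j + 3 = (j + 2) + 1 by ring, Nat.factorial_succ]
      exact Nat.mul_le_mul_right _ (by omega)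
    calc ∑ m ∈ Finset.range j, (m + 3).factorial + (j + 3).factorial
        ≤ 2 * (j + 2).factorial + (j + 3).factorial := by omega
      _ ≤ (j + 3).factorial + (j + 3).factorial := by omega
      _ = 2 * ((j + 1) + 2).factorial := by ring_nf
lemma tail_term {N k : ℕ} (hN : 1 ≤ N) (hk : N ≤ k) :
    ((k.factorial : ℕ) : ℝ≥0∞) * ENNReal.ofReal (cseq k) ≤
      2⁻¹ ^ k * (N : ℝ≥0∞)⁻¹ := by
  have hNR : (0 : ℝ) < N := by exact_mod_cast hN
  have hreal : (k.factorial : ℝ) * cseq k ≤ (1/2 : ℝ)^k * (1/N) := by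
    unfold cseq
    have hfe : ((k + 1).factorial : ℝ) = (k + 1) * k.factorial := by
      rw [Nat.factorial_succ]; push_cast; ring
    rw [hfe]
    have hfk : (0:ℝ) < (k.factorial : ℝ) := by exact_mod_cast k.factorial_pos
    have h2k : (0:ℝ) < 2 ^ k := by positivity
    have heq : (k.factorial : ℝ) * (1 / (2 ^ k * ((k + 1) * k.factorial))) =
        1 / (2 ^ k * (k + 1)) := by
      field_simp
    rw [heq]
    have h1 : (1/2 : ℝ)^k * (1/N) = 1 / (2 ^ k * N) := by
      rw [div_pow]
      field_simp
      simp
    rw [h1]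
    apply one_div_le_one_div_of_le (by positivity)
    have : (N : ℝ) ≤ (k : ℝ) + 1 := by
      have : (N:ℝ) ≤ (k:ℝ) := by exact_mod_cast hk
      linarith
    nlinarith
  calc ((k.factorial : ℕ) : ℝ≥0∞) * ENNReal.ofReal (cseq k)
      = ENNReal.ofReal ((k.factorial : ℝ) * cseq k) := by
        rw [ENNReal.ofReal_mul (by positivity), ENNReal.ofReal_natCast]
    _ ≤ ENNReal.ofReal ((1/2 : ℝ)^k * (1/N)) := ENNReal.ofReal_le_ofReal hreal
    _ = 2⁻¹ ^ k * (N : ℝ≥0∞)⁻¹ := by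
        rw [ENNReal.ofReal_mul (by positivity), ENNReal.ofReal_pow (by norm_num)]
        congr 1
        · rw [one_div, ENNReal.ofReal_inv_of_pos (by norm_num)]
          norm_num
        · rw [one_div, ENNReal.ofReal_inv_of_pos hNR, ENNReal.ofReal_natCast]

lemma measure_Ico_le (m : ℕ) :
    μ01 (Set.Ico (cseq (m + 4)) (cseq (m + 3))) ≤ ENNReal.ofReal (cseq (m + 3)) := by
  calc μ01 (Set.Ico (cseq (m + 4)) (cseq (m + 3)))
      ≤ volume (Set.Ico (cseq (m + 4)) (cseq (m + 3))) := Measure.restrict_apply_le _ _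
    _ = ENNReal.ofReal (cseq (m + 3) - cseq (m + 4)) := Real.volume_Ico
    _ ≤ ENNReal.ofReal (cseq (m + 3)) :=
        ENNReal.ofReal_le_ofReal (by have := cseq_pos (m + 4); linarith)

lemma tsum_tail (N : ℕ) (hN : 1 ≤ N) :
    (∑' m : ℕ, (if m + 3 < N then 0 else (2⁻¹ : ℝ≥0∞) ^ (m + 3))) ≤ 2 * 2⁻¹ ^ N := by
  have hgeom : ∑' i : ℕ, (2⁻¹ : ℝ≥0∞) ^ i = 2 := by
    rw [ENNReal.tsum_geometric, ENNReal.one_sub_inv_two, inv_inv]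
  by_cases h3 : N ≤ 3
  · calc (∑' m : ℕ, (if m + 3 < N then 0 else (2⁻¹ : ℝ≥0∞) ^ (m + 3)))
        ≤ ∑' m : ℕ, (2⁻¹ : ℝ≥0∞) ^ (m + 3) := by
          apply ENNReal.tsum_le_tsum
          intro m
          split <;> simp
      _ = 2 * 2⁻¹ ^ 3 := by
          simp_rw [pow_add]
          rw [ENNReal.tsum_mul_right, hgeom, mul_comm]
      _ ≤ 2 * 2⁻¹ ^ N :=
          mul_le_mul_right (pow_le_pow_right_of_le_one'
            (ENNReal.inv_le_one.mpr one_le_two) h3) 2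
  · push_neg at h3
    set K := N - 3 with hK
    have hKN : K + 3 = N := by omega
    have hinj : Function.Injective (fun i : ℕ => i + K) := add_left_injective K
    have hsupp : Function.support (fun m : ℕ =>
        (if m + 3 < N then 0 else (2⁻¹ : ℝ≥0∞) ^ (m + 3))) ⊆
        Set.range (fun i : ℕ => i + K) := by
      intro m hm
      simp only [Function.mem_support] at hm
      have : ¬ (m + 3 < N) := by
        intro hc
        simp [hc] at hm
      exact ⟨m - K, by simp only []; omega⟩
    rw [← hinj.tsum_eq hsupp]
    apply le_of_eq
    have : ∀ i : ℕ, (if (i + K) + 3 < N then 0 else (2⁻¹ : ℝ≥0∞) ^ ((i + K) + 3)) =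
        2⁻¹ ^ i * 2⁻¹ ^ N := by
      intro i
      rw [if_neg (by omega), show (i + K) + 3 = i + N by omega, pow_add]
    calc (∑' i : ℕ, if (i + K) + 3 < N then 0 else (2⁻¹ : ℝ≥0∞) ^ ((i + K) + 3))
        = ∑' i : ℕ, (2⁻¹ : ℝ≥0∞) ^ i * 2⁻¹ ^ N := by
          exact tsum_congr this
      _ = 2 * 2⁻¹ ^ N := by rw [ENNReal.tsum_mul_right, hgeom]
lemma tsum_head (N : ℕ) (s : ℝ≥0∞) :
    (∑' m : ℕ, (if m + 3 < N then (((m + 3).factorial : ℕ) : ℝ≥0∞) * s else 0)) ≤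
      ((2 * (N - 1).factorial : ℕ) : ℝ≥0∞) * s := by
  by_cases h3 : N ≤ 3
  · have : ∀ m : ℕ, (if m + 3 < N then (((m + 3).factorial : ℕ) : ℝ≥0∞) * s else 0) = 0 := by
      intro m; rw [if_neg (by omega)]
    rw [tsum_congr this, tsum_zero]
    exact zero_le
  · push_neg at h3
    rw [tsum_eq_sum (s := Finset.range (N - 3)) (fun m hm => by
      rw [if_neg (by simp only [Finset.mem_range] at hm; omega)])]
    calc ∑ m ∈ Finset.range (N - 3), (if m + 3 < N then (((m + 3).factorial : ℕ) : ℝ≥0∞) * s else 0)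
        = ∑ m ∈ Finset.range (N - 3), (((m + 3).factorial : ℕ) : ℝ≥0∞) * s := by
          apply Finset.sum_congr rfl
          intro m hm
          rw [if_pos (by simp only [Finset.mem_range] at hm; omega)]
      _ = ((∑ m ∈ Finset.range (N - 3), (m + 3).factorial : ℕ) : ℝ≥0∞) * s := by
          rw [Nat.cast_sum, Finset.sum_mul]
      _ ≤ ((2 * (N - 1).factorial : ℕ) : ℝ≥0∞) * s := by
          apply mul_le_mul_left
          have h := sumfact (N - 3)
          have heq : N - 3 + 2 = N - 1 := by omega
          rw [heq] at h
          exact_mod_cast h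

/-- The function `Y` has finite norm: `Y ∈ 𝒳`. -/
theorem Nnorm_Yfun_lt_top : Nnorm Yfun < ∞ := by
  have key : Nnorm Yfun ≤ 4 := by
    unfold Nnorm
    apply iSup_le; intro N
    apply iSup_le; intro hN
    set s : ℝ≥0∞ := 1 / ((2 : ℝ≥0∞) ^ N * (N.factorial : ℝ≥0∞)) with hs
    have hNne : ((N : ℝ≥0∞) * 2 ^ N) ≠ 0 :=
      mul_ne_zero (Nat.cast_ne_zero.mpr (by omega))
        (pow_ne_zero _ (by norm_num))
    have hNtop : ((N : ℝ≥0∞) * 2 ^ N) ≠ ⊤ :=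
      ENNReal.mul_ne_top (ENNReal.natCast_ne_top N)
        (ENNReal.pow_ne_top ENNReal.ofNat_ne_top)
    have hbound : (⨆ (A : Set ℝ) (_ : MeasurableSet A) (_ : A ⊆ Set.Icc (0 : ℝ) 1)
        (_ : μ01 A ≤ s), ∫⁻ t in A, ENNReal.ofReal |Yfun t| ∂μ01) ≤
        4 * ((N : ℝ≥0∞) * 2 ^ N)⁻¹ := by
      apply iSup_le; intro A
      apply iSup_le; intro hA
      apply iSup_le; intro _
      apply iSup_le; intro hAs
      rw [lintegral_Yfun A hA]
      have hterm : ∀ m : ℕ,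
          (((m + 3).factorial : ℕ) : ℝ≥0∞) * μ01 (Set.Ico (cseq (m + 4)) (cseq (m + 3)) ∩ A) ≤
          (if m + 3 < N then (((m + 3).factorial : ℕ) : ℝ≥0∞) * s else 0) +
          (if m + 3 < N then 0 else (2⁻¹ : ℝ≥0∞) ^ (m + 3)) * (N : ℝ≥0∞)⁻¹ := by
        intro m
        by_cases hc : m + 3 < N
        · rw [if_pos hc, if_pos hc, zero_mul, add_zero]
          exact mul_le_mul_right (le_trans (measure_mono Set.inter_subset_right) hAs) _
        · rw [if_neg hc, if_neg hc, zero_add]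
          calc (((m + 3).factorial : ℕ) : ℝ≥0∞) *
                μ01 (Set.Ico (cseq (m + 4)) (cseq (m + 3)) ∩ A)
              ≤ (((m + 3).factorial : ℕ) : ℝ≥0∞) * ENNReal.ofReal (cseq (m + 3)) :=
                mul_le_mul_right
                  (le_trans (measure_mono Set.inter_subset_left) (measure_Ico_le m)) _
            _ ≤ 2⁻¹ ^ (m + 3) * (N : ℝ≥0∞)⁻¹ := tail_term hN (by omega)
      calc ∑' m : ℕ, (((m + 3).factorial : ℕ) : ℝ≥0∞) *
              μ01 (Set.Ico (cseq (m + 4)) (cseq (m + 3)) ∩ A)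
          ≤ ∑' m : ℕ, ((if m + 3 < N then (((m + 3).factorial : ℕ) : ℝ≥0∞) * s else 0) +
              (if m + 3 < N then 0 else (2⁻¹ : ℝ≥0∞) ^ (m + 3)) * (N : ℝ≥0∞)⁻¹) :=
            ENNReal.tsum_le_tsum hterm
        _ = (∑' m : ℕ, (if m + 3 < N then (((m + 3).factorial : ℕ) : ℝ≥0∞) * s else 0)) +
            (∑' m : ℕ, (if m + 3 < N then 0 else (2⁻¹ : ℝ≥0∞) ^ (m + 3))) * (N : ℝ≥0∞)⁻¹ := by
            rw [ENNReal.tsum_add, ENNReal.tsum_mul_right]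
        _ ≤ ((2 * (N - 1).factorial : ℕ) : ℝ≥0∞) * s + (2 * 2⁻¹ ^ N) * (N : ℝ≥0∞)⁻¹ :=
            add_le_add (tsum_head N s) (mul_le_mul_left (tsum_tail N hN) _)
        _ = 4 * ((N : ℝ≥0∞) * 2 ^ N)⁻¹ := by
            have hfne : ((N - 1).factorial : ℝ≥0∞) ≠ 0 := by
              exact_mod_cast Nat.cast_ne_zero.mpr (N - 1).factorial_pos.ne'
            have hftop : ((N - 1).factorial : ℝ≥0∞) ≠ ⊤ := ENNReal.natCast_ne_top _
            have hNfact : ((N.factorial : ℕ) : ℝ≥0∞) = (N : ℝ≥0∞) * ((N - 1).factorial : ℝ≥0∞) := by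
              rw [← Nat.cast_mul]
              congr 1
              exact (Nat.mul_factorial_pred (by omega)).symm
            have hs2 : s = ((N : ℝ≥0∞) * 2 ^ N)⁻¹ * ((N - 1).factorial : ℝ≥0∞)⁻¹ := by
              rw [hs, one_div, hNfact, show (2 : ℝ≥0∞) ^ N * ((N : ℝ≥0∞) * ((N - 1).factorial : ℝ≥0∞))
                = ((N : ℝ≥0∞) * 2 ^ N) * ((N - 1).factorial : ℝ≥0∞) by ring,
                ENNReal.mul_inv (Or.inl hNne) (Or.inl hNtop)]
            have h1 : ((2 * (N - 1).factorial : ℕ) : ℝ≥0∞) * s = 2 * ((N : ℝ≥0∞) * 2 ^ N)⁻¹ := by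
              rw [hs2, Nat.cast_mul, Nat.cast_ofNat]
              rw [show (2 : ℝ≥0∞) * ((N - 1).factorial : ℝ≥0∞) *
                (((N : ℝ≥0∞) * 2 ^ N)⁻¹ * ((N - 1).factorial : ℝ≥0∞)⁻¹) =
                2 * ((N : ℝ≥0∞) * 2 ^ N)⁻¹ *
                (((N - 1).factorial : ℝ≥0∞) * ((N - 1).factorial : ℝ≥0∞)⁻¹) by ring]
              rw [ENNReal.mul_inv_cancel hfne hftop, mul_one]
            have h2 : (2 * (2⁻¹ : ℝ≥0∞) ^ N) * (N : ℝ≥0∞)⁻¹ = 2 * ((N : ℝ≥0∞) * 2 ^ N)⁻¹ := by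
              rw [ENNReal.mul_inv (Or.inl (by exact_mod_cast Nat.cast_ne_zero.mpr (by omega)))
                (Or.inl (ENNReal.natCast_ne_top N)), ← ENNReal.inv_pow]
              ring
            rw [h1, h2]
            rw [← two_mul]
            rw [← mul_assoc]
            norm_num
    calc ((N : ℝ≥0∞) * 2 ^ N) * (⨆ (A : Set ℝ) (_ : MeasurableSet A)
          (_ : A ⊆ Set.Icc (0 : ℝ) 1) (_ : μ01 A ≤ s),
          ∫⁻ t in A, ENNReal.ofReal |Yfun t| ∂μ01)
        ≤ ((N : ℝ≥0∞) * 2 ^ N) * (4 * ((N : ℝ≥0∞) * 2 ^ N)⁻¹) :=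
          mul_le_mul_right hbound _
      _ = 4 := by
          rw [show ((N : ℝ≥0∞) * 2 ^ N) * (4 * ((N : ℝ≥0∞) * 2 ^ N)⁻¹) =
            4 * (((N : ℝ≥0∞) * 2 ^ N) * ((N : ℝ≥0∞) * 2 ^ N)⁻¹) by ring,
            ENNReal.mul_inv_cancel hNne hNtop, mul_one]
  exact lt_of_le_of_lt key (by norm_num)
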